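/- arXiv:0709.3169 — 3 statements merged into one kernel-verified Lean document; each statement's English description precedes it below -/
import Mathlib

section
/- Let T be a Puppe triangulated category with a chosen distinguished triangle A →f B →u_f C_f →v_f A[1] for each morphism f. Given a morphism of distinguished triangles (a, b, c) : [f] → [f'] and another morphism (a', b', c') : [f'] → [f''] such that a = 0, b = 0, a' = 0, b' = 0, then c' ∘ c = 0. Hence the kernel of the projection functor π : Triangles₀(T) → T^[1], (a,b,c) ↦ (a,b), is a square-zero ideal. -/
open CategoryTheory CategoryTheory.Limits CategoryTheory.Pretriangulated

/-- In a (Puppe) triangulated category, given morphisms of distinguished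
triangles `(a,b,c) : T ⟶ T'` and `(a',b',c') : T' ⟶ T''` with `a = b = 0` and
`a' = b' = 0`, one has `c' ∘ c = 0`. Hence the kernel of the projection
`Triangles₀(T) → T^[1]`, `(a,b,c) ↦ (a,b)`, is a square-zero ideal. -/
theorem stmt_7 {C : Type*} [Category C] [Preadditive C] [HasZeroObject C] [HasShift C ℤ]
    [∀ n : ℤ, (shiftFunctor C n).Additive] [Pretriangulated C]
    (T T' T'' : Triangle C)
    (hT : T ∈ distTriang C) (hT' : T' ∈ distTriang C) (hT'' : T'' ∈ distTriang C)
    (φ : T ⟶ T') (ψ : T' ⟶ T'')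
    (h1 : φ.hom₁ = 0) (h2 : φ.hom₂ = 0) (h1' : ψ.hom₁ = 0) (h2' : ψ.hom₂ = 0) :
    φ.hom₃ ≫ ψ.hom₃ = 0 := by
  obtain ⟨g, hg⟩ := T'.yoneda_exact₃ hT' ψ.hom₃ (by rw [ψ.comm₂, h2', zero_comp])
  rw [hg, ← Category.assoc, ← φ.comm₃, h1, Functor.map_zero, comp_zero, zero_comp]
end

section
/- Let 0 → D → A →F B → 0 be a singular extension of additive categories (F identity on objects, surjective on hom-groups, with square-zero kernel ideal isomorphic to the bifunctor D). If e : A₀ → A₀ is an idempotent in A, then e splits in A if and only if F(e) splits in B. -/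
open CategoryTheory

section RingAux

variable {R : Type*} [Ring R]

/-- If `e, p` are idempotents with `e*p + p*e = e + p`, then the classical
conjugating element is a one-sided unit. -/
lemma stmt14_aux_unit (e p : R) (he : e * e = e) (hp : p * p = p)
    (hs : e * p + p * e = e + p) :
    (e * p + (1 - e) * (1 - p)) * (p * e + (1 - p) * (1 - e)) = 1 := by
  have h1 : (e * p + (1 - e) * (1 - p)) * (p * e + (1 - p) * (1 - e))
      = 1 - e - e - p + e * p + p * e + e * e
        + e * (p * p - p) * e + (e * (p - p * p)) * (1 - e)
        + ((1 - e) * (p - p * p)) * e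
        + (1 - e) * ((p * p - p)) * (1 - e) := by
    noncomm_ring
  rw [hp, he] at h1
  simp only [sub_self, mul_zero, zero_mul, add_zero] at h1
  rw [h1, show (1 : R) - e - e - p + e * p + p * e + e
      = (e * p + p * e) - (e + p) + 1 from by abel, hs]
  abel

lemma stmt14_aux_comm (e p : R) (he : e * e = e) (hp : p * p = p) :
    e * (e * p + (1 - e) * (1 - p)) = (e * p + (1 - e) * (1 - p)) * p := by
  have h1 : e * (e * p + (1 - e) * (1 - p)) = (e * e) * p + (e - e * e) * (1 - p) := by
    noncomm_ring
  have h2 : (e * p + (1 - e) * (1 - p)) * p = e * (p * p) + (1 - e) * (p - p * p) := by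
    noncomm_ring
  rw [he] at h1
  rw [hp] at h2
  simp only [sub_self, mul_zero, zero_mul, add_zero] at h1 h2
  rw [h1, h2]

end RingAux

/-- Let `0 → D → A →F B → 0` be a singular extension of additive
categories: `F` is an additive functor, bijective on objects and surjective on
hom-groups, whose kernel ideal is square-zero. Then an idempotent `e` of `A` splits
iff `F(e)` splits in `B`. -/
theorem stmt_14 {A B : Type*} [Category A] [Category B] [Preadditive A] [Preadditive B]
    (F : A ⥤ B) [F.Additive]
    (hobj : Function.Bijective F.obj)
    (hfull : ∀ (X Y : A) (g : F.obj X ⟶ F.obj Y), ∃ f : X ⟶ Y, F.map f = g)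
    (hsq : ∀ {X Y Z : A} (f : X ⟶ Y) (g : Y ⟶ Z),
      F.map f = 0 → F.map g = 0 → f ≫ g = 0)
    (A₀ : A) (e : A₀ ⟶ A₀) (he : e ≫ e = e) :
    (∃ (B₀ : A) (a : A₀ ⟶ B₀) (b : B₀ ⟶ A₀), a ≫ b = e ∧ b ≫ a = 𝟙 B₀) ↔
    (∃ (B' : B) (a : F.obj A₀ ⟶ B') (b : B' ⟶ F.obj A₀),
      a ≫ b = F.map e ∧ b ≫ a = 𝟙 B') := by
  constructor
  · rintro ⟨B₀, a, b, h1, h2⟩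
    exact ⟨F.obj B₀, F.map a, F.map b,
      by rw [← F.map_comp, h1], by rw [← F.map_comp, h2, F.map_id]⟩
  · rintro ⟨B', a, b, h1, h2⟩
    obtain ⟨C, rfl⟩ := hobj.2 B'
    obtain ⟨a', ha⟩ := hfull A₀ C a
    obtain ⟨b', hb⟩ := hfull C A₀ b
    -- correct `a'` so that `b' ≫ a'' = 𝟙 C`
    set k : C ⟶ C := b' ≫ a' - 𝟙 C with hk
    have hFk : F.map k = 0 := by
      simp [hk, ha, hb, h2]
    have hkk : k ≫ k = 0 := hsq k k hFk hFk
    set a'' : A₀ ⟶ C := a' ≫ (𝟙 C - k) with ha''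
    have hba : b' ≫ a'' = 𝟙 C := by
      have hq : b' ≫ a' = 𝟙 C + k := by rw [hk]; abel
      rw [ha'', ← Category.assoc, hq]
      simp [Preadditive.add_comp, Preadditive.comp_sub, hkk]
    have hFa'' : F.map a'' = a := by
      simp [ha'', ha, hFk]
    set p : A₀ ⟶ A₀ := a'' ≫ b' with hp'
    have hpp : p ≫ p = p := by
      rw [hp']
      simp only [Category.assoc]
      rw [reassoc_of% hba]
    have hFm : F.map (p - e) = 0 := by
      simp [hp', hFa'', hb, h1]
    have hmm : (p - e) ≫ (p - e) = 0 := hsq _ _ hFm hFm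
    -- now move to the endomorphism ring `End A₀`
    obtain ⟨eE, heE⟩ : ∃ x : End A₀, x = e := ⟨e, rfl⟩
    obtain ⟨pE, hpE⟩ : ∃ x : End A₀, x = p := ⟨p, rfl⟩
    have hE : eE * eE = eE := by rw [heE]; exact he
    have hP : pE * pE = pE := by rw [hpE]; exact hpp
    have hPE : (pE - eE) * (pE - eE) = 0 := by rw [heE, hpE]; exact hmm
    have hexp : (pE - eE) * (pE - eE) = pE * pE - pE * eE - eE * pE + eE * eE := by
      noncomm_ring
    rw [hexp, hP, hE] at hPE
    have hS : eE * pE + pE * eE = eE + pE := by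
      calc eE * pE + pE * eE = eE + pE - (pE - pE * eE - eE * pE + eE) := by abel
        _ = eE + pE - 0 := by rw [hPE]
        _ = eE + pE := by abel
    have hS' : pE * eE + eE * pE = pE + eE := by
      rw [add_comm, hS]; exact add_comm _ _
    -- the conjugating automorphism
    set uE : End A₀ := eE * pE + (1 - eE) * (1 - pE) with hu
    set vE : End A₀ := pE * eE + (1 - pE) * (1 - eE) with hv
    have hvu : vE ≫ uE = 𝟙 A₀ := stmt14_aux_unit eE pE hE hP hS
    have huv : uE ≫ vE = 𝟙 A₀ := stmt14_aux_unit pE eE hP hE hS'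
    have hcomm : uE ≫ e = p ≫ uE := by
      rw [← heE, ← hpE]; exact stmt14_aux_comm eE pE hE hP
    refine ⟨C, vE ≫ a'', b' ≫ uE, ?_, ?_⟩
    · calc (vE ≫ a'') ≫ b' ≫ uE = vE ≫ (a'' ≫ b') ≫ uE := by simp only [Category.assoc]
        _ = vE ≫ p ≫ uE := by rw [← hp']
        _ = vE ≫ uE ≫ e := by rw [← hcomm]
        _ = (vE ≫ uE) ≫ e := by rw [Category.assoc]
        _ = e := by rw [hvu, Category.id_comp]
    · calc (b' ≫ uE) ≫ vE ≫ a'' = b' ≫ (uE ≫ vE) ≫ a'' := by simp only [Category.assoc]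
        _ = b' ≫ a'' := by rw [huv, Category.id_comp]
        _ = 𝟙 C := hba
end

section
/- Let T be a Puppe triangulated category and let (a, b, c) be an endomorphism of a distinguished triangle A →f B → C_f → A[1] (i.e., a morphism of the triangle to itself) such that a, b, c are idempotents. If a and b are split idempotents in T, then (a, b, c) is a split idempotent in the category Triangles₀ of triangles, and in particular c is a split idempotent in T. -/
/-!
Morphisms of distinguished triangles that vanish on the first two objects form a square-zero
ideal: on the third object such a morphism factors through `mor₂` and is killed by
precomposition with `mor₂`. Taking for `T'` a cone of `j₁ ≫ T.mor₁ ≫ r₂`, the splittings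
`(r₁, j₁)` of `a` and `(r₂, j₂)` of `b` extend to morphisms `r : T ⟶ T'`, `j : T' ⟶ T` splitting
`φ` modulo this ideal. Such an approximate splitting is corrected in two steps: `j ≫ r` is
unipotent, hence invertible, which makes `r` split; and two idempotents `d`, `e` with
`(e - d)² = 0` are conjugate, by the unit `1 + de - ed`.
-/

open CategoryTheory CategoryTheory.Limits CategoryTheory.Pretriangulated

theorem IsIdempotentElem.exists_unit_mul_eq_mul_of_sub_mul_self_eq_zero {R : Type*} [Ring R]
    {d e : R} (hd : IsIdempotentElem d) (he : IsIdempotentElem e)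
    (hde : (e - d) * (e - d) = 0) : ∃ u : Rˣ, (u : R) * e = d * u := by
  obtain ⟨ε, rfl⟩ : ∃ ε, e = d + ε := ⟨e - d, by abel⟩
  rw [add_sub_cancel_left] at hde
  have hanti : d * ε + ε * d = ε := by
    linear_combination (norm := noncomm_ring) he.eq - hd.eq - hde
  have hded : d * ε * d = 0 := by
    linear_combination (norm := noncomm_ring) d * hanti - hd.eq * ε
  have heded : ε * d * ε = 0 := by
    linear_combination (norm := noncomm_ring) hanti * ε - d * hde + hde
  have hn : (d * ε - ε * d) * (d * ε - ε * d) = 0 := by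
    linear_combination (norm := noncomm_ring)
      hded * ε - d * hde * d - ε * hd.eq * ε - heded + ε * hded
  refine ⟨⟨1 + (d * ε - ε * d), 1 - (d * ε - ε * d), ?_, ?_⟩, ?_⟩
  · linear_combination (norm := noncomm_ring) -hn
  · linear_combination (norm := noncomm_ring) -hn
  · linear_combination (norm := noncomm_ring)
      2 * hded + d * hde - ε * hd.eq - heded - hd.eq * ε - hanti

namespace CategoryTheory.Preadditive

variable {𝒜 : Type*} [Category 𝒜] [Preadditive 𝒜]

theorem exists_split_of_sub_comp_self_eq_zero {X Y : 𝒜} {e : X ⟶ X} (he : e ≫ e = e)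
    (r : X ⟶ Y) (k : Y ⟶ X) (hkr : k ≫ r = 𝟙 Y) (hsq : (e - r ≫ k) ≫ (e - r ≫ k) = 0) :
    ∃ (r' : X ⟶ Y) (j' : Y ⟶ X), r' ≫ j' = e ∧ j' ≫ r' = 𝟙 Y := by
  have hd : IsIdempotentElem (M := End X) (r ≫ k) := by
    rw [IsIdempotentElem, End.mul_def, Category.assoc, reassoc_of% hkr]
  obtain ⟨u, hu⟩ := IsIdempotentElem.exists_unit_mul_eq_mul_of_sub_mul_self_eq_zero
    (R := End X) hd he hsq
  replace hu : e ≫ u.val = u.val ≫ r ≫ k := by simpa only [End.mul_def] using hu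
  have hu_inv : u.val ≫ u.inv = 𝟙 X := u.inv_val
  have hinv_u : u.inv ≫ u.val = 𝟙 X := u.val_inv
  have hconj : e = u.val ≫ r ≫ k ≫ u.inv := by
    calc e = e ≫ u.val ≫ u.inv := by rw [hu_inv, Category.comp_id]
      _ = u.val ≫ r ≫ k ≫ u.inv := by rw [reassoc_of% hu]
  refine ⟨u.val ≫ r, k ≫ u.inv, by simp only [Category.assoc, ← hconj], ?_⟩
  rw [Category.assoc, reassoc_of% hinv_u, hkr]

end CategoryTheory.Preadditive

namespace CategoryTheory.Pretriangulated

variable {C : Type*} [Category C] [Preadditive C] [HasZeroObject C] [HasShift C ℤ]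
  [∀ n : ℤ, (shiftFunctor C n).Additive] [Pretriangulated C]

theorem comp_eq_zero_of_hom₁_eq_zero_of_hom₂_eq_zero {S₁ S₂ S₃ : Triangle C}
    (hS₂ : S₂ ∈ distTriang C) (f : S₁ ⟶ S₂) (g : S₂ ⟶ S₃) (hf : f.hom₁ = 0) (hg : g.hom₂ = 0) :
    f ≫ g = 0 := by
  obtain ⟨β, hβ⟩ := Triangle.coyoneda_exact₃ S₂ hS₂ f.hom₃ (by
    rw [← f.comm₃, hf, Functor.map_zero, Limits.comp_zero])
  ext
  · simp [hf]
  · simp [hg]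
  · simp [hβ, g.comm₂, hg]

theorem exists_split_of_split_hom₁_hom₂ {T T' : Triangle C} (hT : T ∈ distTriang C)
    (hT' : T' ∈ distTriang C) {φ : T ⟶ T} (hφ : φ ≫ φ = φ) (r : T ⟶ T') (j : T' ⟶ T)
    (hrj₁ : r.hom₁ ≫ j.hom₁ = φ.hom₁) (hrj₂ : r.hom₂ ≫ j.hom₂ = φ.hom₂)
    (hjr₁ : j.hom₁ ≫ r.hom₁ = 𝟙 T'.obj₁) (hjr₂ : j.hom₂ ≫ r.hom₂ = 𝟙 T'.obj₂) :
    ∃ (r' : T ⟶ T') (j' : T' ⟶ T), r' ≫ j' = φ ∧ j' ≫ r' = 𝟙 T' := by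
  set δ := j ≫ r - 𝟙 T'
  have hδ : δ ≫ δ = 0 :=
    comp_eq_zero_of_hom₁_eq_zero_of_hom₂_eq_zero hT' δ δ (by simp [δ, hjr₁])
      (by simp [δ, hjr₂])
  have hkr : ((𝟙 T' - δ) ≫ j) ≫ r = 𝟙 T' := by
    rw [Category.assoc, show j ≫ r = 𝟙 T' + δ from (add_sub_cancel _ _).symm]
    simp only [Preadditive.sub_comp, Preadditive.comp_add, Category.id_comp, Category.comp_id, hδ]
    abel
  refine Preadditive.exists_split_of_sub_comp_self_eq_zero hφ r _ hkr
    (comp_eq_zero_of_hom₁_eq_zero_of_hom₂_eq_zero hT _ _ ?_ ?_)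
  · simp [δ, hjr₁, hrj₁]
  · simp [δ, hjr₂, hrj₂]

end CategoryTheory.Pretriangulated

/-- In a (Puppe) triangulated category, let `(a, b, c)` be an idempotent
endomorphism of a distinguished triangle. If `a` and `b` are split idempotents, then
`(a, b, c)` is a split idempotent in the category of (distinguished) triangles; in
particular `c` is a split idempotent. -/
theorem stmt_16 {C : Type*} [Category C] [Preadditive C] [HasZeroObject C] [HasShift C ℤ]
    [∀ n : ℤ, (shiftFunctor C n).Additive] [Pretriangulated C]
    (T : Triangle C) (hT : T ∈ distTriang C)
    (φ : T ⟶ T) (hφ : φ ≫ φ = φ)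
    (ha : φ.hom₁ ≫ φ.hom₁ = φ.hom₁) (hb : φ.hom₂ ≫ φ.hom₂ = φ.hom₂)
    (hc : φ.hom₃ ≫ φ.hom₃ = φ.hom₃)
    (hasplit : ∃ (B₁ : C) (r : T.obj₁ ⟶ B₁) (j : B₁ ⟶ T.obj₁),
      r ≫ j = φ.hom₁ ∧ j ≫ r = 𝟙 B₁)
    (hbsplit : ∃ (B₂ : C) (r : T.obj₂ ⟶ B₂) (j : B₂ ⟶ T.obj₂),
      r ≫ j = φ.hom₂ ∧ j ≫ r = 𝟙 B₂) :
    (∃ (T' : Triangle C), (T' ∈ distTriang C) ∧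
      ∃ (r : T ⟶ T') (j : T' ⟶ T), r ≫ j = φ ∧ j ≫ r = 𝟙 T') ∧
    (∃ (B₃ : C) (r : T.obj₃ ⟶ B₃) (j : B₃ ⟶ T.obj₃),
      r ≫ j = φ.hom₃ ∧ j ≫ r = 𝟙 B₃) := by
  obtain ⟨B₁, r₁, j₁, hrj₁, hjr₁⟩ := hasplit
  obtain ⟨B₂, r₂, j₂, hrj₂, hjr₂⟩ := hbsplit
  obtain ⟨Z, g, h, hT'⟩ := distinguished_cocone_triangle (j₁ ≫ T.mor₁ ≫ r₂)
  have hr : T.mor₁ ≫ r₂ = r₁ ≫ j₁ ≫ T.mor₁ ≫ r₂ := by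
    rw [reassoc_of% hrj₁, ← φ.comm₁_assoc, ← hrj₂, Category.assoc, hjr₂, Category.comp_id]
  have hj : (j₁ ≫ T.mor₁ ≫ r₂) ≫ j₂ = j₁ ≫ T.mor₁ := by
    rw [Category.assoc, Category.assoc, hrj₂, φ.comm₁, ← hrj₁, Category.assoc, reassoc_of% hjr₁]
  obtain ⟨r₃, hr₂, hr₃⟩ := complete_distinguished_triangle_morphism _ _ hT hT' r₁ r₂ hr
  obtain ⟨j₃, hj₂, hj₃⟩ := complete_distinguished_triangle_morphism _ _ hT' hT j₁ j₂ hj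
  obtain ⟨r, j, hrj, hjr⟩ := exists_split_of_split_hom₁_hom₂ hT hT' hφ
    ⟨r₁, r₂, r₃, hr, hr₂, hr₃⟩ ⟨j₁, j₂, j₃, hj, hj₂, hj₃⟩ hrj₁ hrj₂ hjr₁ hjr₂
  exact ⟨⟨_, hT', r, j, hrj, hjr⟩, _, r.hom₃, j.hom₃, congrArg TriangleMorphism.hom₃ hrj,
    congrArg TriangleMorphism.hom₃ hjr⟩
end
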